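/- For every λ > 0 and ρ > 0, the integral ∫_{|y|<ρ} f₃(λ/|y|) dy over ℝ³ is finite, where f₃ : [0,∞) → [0,∞) is defined by f₃((1+s)log(1+s)) = s³. -/

import Mathlib

/-!
Write `g s = (1 + s) * log (1 + s)`, a strictly increasing bijection of `[0, ∞)`, so `f₃ (g s) = s³`
determines `f₃` on `[0, ∞)`: it is monotone there, `f₃ t ≤ t³`, and, since
`log (g s) ≤ 2 log (1 + s)`, `f₃ t ≤ 8 t³ / log² t` for `t ≥ e`. In polar coordinates the integral
becomes `∫₀^ρ r² f₃ (λ / r) dr`, whose integrand is bounded away from `0` and is at most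
`8 λ³ / (r log² (λ / r))` near `0`; the latter is the derivative of `1 / log (λ / r)`, which tends
to `0` as `r → 0⁺`.
-/

open MeasureTheory Set Filter Topology Real

lemma le_one_add_mul_log_one_add {s : ℝ} (hs : 0 ≤ s) : s ≤ (1 + s) * log (1 + s) := by
  have h := one_sub_inv_le_log_of_pos (by linarith : (0 : ℝ) < 1 + s)
  calc s = (1 + s) * (1 - (1 + s)⁻¹) := by field_simp; ring
    _ ≤ (1 + s) * log (1 + s) := by gcongr

lemma strictMonoOn_one_add_mul_log_one_add :
    StrictMonoOn (fun s : ℝ => (1 + s) * log (1 + s)) (Ici 0) := by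
  intro a (ha : 0 ≤ a) b _ hab
  have hlog : log (1 + a) < log (1 + b) := log_lt_log (by linarith) (by linarith)
  have : 0 ≤ log (1 + a) := log_nonneg (by linarith)
  dsimp only
  nlinarith

lemma exists_one_add_mul_log_one_add_eq {t : ℝ} (ht : 0 ≤ t) :
    ∃ s, 0 ≤ s ∧ (1 + s) * log (1 + s) = t := by
  have hcont : ContinuousOn (fun s : ℝ => (1 + s) * log (1 + s)) (Icc 0 t) :=
    ContinuousOn.mul (by fun_prop) (ContinuousOn.log (by fun_prop) fun s hs => by linarith [hs.1])
  obtain ⟨s, hs, hst⟩ := intermediate_value_Icc ht hcont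
    ⟨by simpa using ht, le_one_add_mul_log_one_add ht⟩
  exact ⟨s, hs.1, hst⟩

lemma mul_log_one_add_mul_log_one_add_le {s : ℝ} (hs : 0 ≤ s) :
    s * log ((1 + s) * log (1 + s)) ≤ 2 * ((1 + s) * log (1 + s)) := by
  rcases hs.eq_or_lt with rfl | hs
  · simp
  have hL : 0 < log (1 + s) := log_pos (by linarith)
  have hlog : log ((1 + s) * log (1 + s)) ≤ 2 * log (1 + s) := by
    rw [log_mul (by linarith) hL.ne']
    linarith [log_le_sub_one_of_pos hL]
  nlinarith

lemma hasDerivAt_inv_log_const_div {c r : ℝ} (hlog : log (c / r) ≠ 0) :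
    HasDerivAt (fun x => (log (c / x))⁻¹) (r * log (c / r) ^ 2)⁻¹ r := by
  have hc : c ≠ 0 := by rintro rfl; simp at hlog
  have hr : r ≠ 0 := by rintro rfl; simp at hlog
  have h : HasDerivAt (fun x => log (c / x)) (-r⁻¹) r := by
    simp only [div_eq_mul_inv]
    refine (((hasDerivAt_inv hr).const_mul c).log
      (mul_ne_zero hc (inv_ne_zero hr))).congr_deriv ?_
    field_simp
  refine (h.inv hlog).congr_deriv ?_
  rw [neg_neg, mul_inv, div_eq_mul_inv]

lemma integrableOn_inv_mul_log_const_div_sq {b c : ℝ} (hc : 0 < c) (hbc : b < c) :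
    IntegrableOn (fun r => (r * log (c / r) ^ 2)⁻¹) (Ioc 0 b) := by
  have hlog_pos : ∀ r ∈ Ioc 0 b, 0 < log (c / r) := fun r hr =>
    log_pos ((one_lt_div hr.1).2 (hr.2.trans_lt hbc))
  refine intervalIntegral.integrableOn_deriv_of_nonneg (g := fun r => (log (c / r))⁻¹) ?_
    (fun r hr => hasDerivAt_inv_log_const_div (hlog_pos r (Ioo_subset_Ioc_self hr)).ne')
    (fun r hr => (inv_pos.2 (mul_pos hr.1 (pow_pos (hlog_pos r (Ioo_subset_Ioc_self hr)) 2))).le)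
  intro r hr
  rcases hr.1.eq_or_lt with rfl | hr₀
  · -- at `r = 0` the junk values `c / 0 = 0`, `log 0 = 0`, `0⁻¹ = 0` give the continuous extension
    have hlim : Tendsto (fun r => (log (c / r))⁻¹) (𝓝[>] 0) (𝓝 0) :=
      tendsto_inv_atTop_zero.comp <| tendsto_log_atTop.comp <|
        (tendsto_inv_nhdsGT_zero.const_mul_atTop hc).congr fun r => (div_eq_mul_inv c r).symm
    refine ContinuousWithinAt.mono ?_ Icc_subset_Ici_self
    rw [← continuousWithinAt_Ioi_iff_Ici, ContinuousWithinAt]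
    simpa using hlim
  · exact ((continuousAt_const.div continuousAt_id hr₀.ne').log
      (div_ne_zero hc.ne' hr₀.ne')).inv₀ (hlog_pos r ⟨hr₀, hr.2⟩).ne' |>.continuousWithinAt

section CubeOfOneAddMulLog

variable {f : ℝ → ℝ}

lemma monotoneOn_of_comp_one_add_mul_log_one_add
    (hf : ∀ s : ℝ, 0 ≤ s → f ((1 + s) * log (1 + s)) = s ^ 3) : MonotoneOn f (Ici 0) := by
  intro t₁ ht₁ t₂ ht₂ ht
  obtain ⟨s₁, hs₁, rfl⟩ := exists_one_add_mul_log_one_add_eq ht₁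
  obtain ⟨s₂, hs₂, rfl⟩ := exists_one_add_mul_log_one_add_eq ht₂
  rw [hf s₁ hs₁, hf s₂ hs₂]
  exact pow_le_pow_left₀ hs₁
    ((strictMonoOn_one_add_mul_log_one_add.le_iff_le hs₁ hs₂).1 ht) 3

lemma nonneg_and_le_cube_of_comp_one_add_mul_log_one_add
    (hf : ∀ s : ℝ, 0 ≤ s → f ((1 + s) * log (1 + s)) = s ^ 3) {t : ℝ} (ht : 0 ≤ t) :
    0 ≤ f t ∧ f t ≤ t ^ 3 := by
  obtain ⟨s, hs, rfl⟩ := exists_one_add_mul_log_one_add_eq ht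
  rw [hf s hs]
  exact ⟨by positivity, pow_le_pow_left₀ hs (le_one_add_mul_log_one_add hs) 3⟩

lemma mul_log_sq_le_of_comp_one_add_mul_log_one_add
    (hf : ∀ s : ℝ, 0 ≤ s → f ((1 + s) * log (1 + s)) = s ^ 3) {t : ℝ} (ht : exp 1 ≤ t) :
    f t * log t ^ 2 ≤ 8 * t ^ 3 := by
  have hlog : 1 ≤ log t := by simpa using log_le_log (exp_pos 1) ht
  obtain ⟨s, hs, rfl⟩ := exists_one_add_mul_log_one_add_eq ((exp_pos 1).le.trans ht)
  rw [hf s hs]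
  calc s ^ 3 * log ((1 + s) * log (1 + s)) ^ 2
      ≤ s ^ 3 * log ((1 + s) * log (1 + s)) ^ 3 :=
      mul_le_mul_of_nonneg_left (pow_le_pow_right₀ hlog (by norm_num)) (by positivity)
    _ = (s * log ((1 + s) * log (1 + s))) ^ 3 := by ring
    _ ≤ (2 * ((1 + s) * log (1 + s))) ^ 3 :=
      pow_le_pow_left₀ (mul_nonneg hs (by linarith)) (mul_log_one_add_mul_log_one_add_le hs) 3
    _ = 8 * ((1 + s) * log (1 + s)) ^ 3 := by ring

lemma norm_sq_mul_comp_const_div_le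
    (hf : ∀ s : ℝ, 0 ≤ s → f ((1 + s) * log (1 + s)) = s ^ 3) {c ρ r : ℝ} (hc : 0 < c)
    (hr : r ∈ Ioo 0 ρ) :
    ‖r ^ 2 * f (c / r)‖ ≤ ρ ^ 2 * exp 1 ^ 3 +
      8 * c ^ 3 * (Ioc 0 (c / exp 1)).indicator (fun r => (r * log (c / r) ^ 2)⁻¹) r := by
  have hr₀ : 0 < r := hr.1
  obtain ⟨hf₀, hf_le⟩ :=
    nonneg_and_le_cube_of_comp_one_add_mul_log_one_add hf (by positivity : 0 ≤ c / r)
  rw [Real.norm_of_nonneg (by positivity)]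
  by_cases hrm : r ≤ c / exp 1
  · have hexp : exp 1 ≤ c / r := by rwa [le_div_iff₀ hr₀, mul_comm, ← le_div_iff₀ (exp_pos 1)]
    have hlog : 0 < log (c / r) := log_pos ((one_lt_exp_iff.2 one_pos).trans_le hexp)
    have key : r ^ 2 * f (c / r) ≤ 8 * c ^ 3 * (r * log (c / r) ^ 2)⁻¹ := by
      rw [← div_eq_mul_inv, le_div_iff₀ (by positivity)]
      calc r ^ 2 * f (c / r) * (r * log (c / r) ^ 2)
          = r ^ 3 * (f (c / r) * log (c / r) ^ 2) := by ring
        _ ≤ r ^ 3 * (8 * (c / r) ^ 3) :=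
          mul_le_mul_of_nonneg_left (mul_log_sq_le_of_comp_one_add_mul_log_one_add hf hexp)
            (by positivity)
        _ = 8 * c ^ 3 := by field_simp
    rw [indicator_of_mem (show r ∈ Ioc 0 (c / exp 1) from ⟨hr₀, hrm⟩)]
    linarith [(by positivity : 0 ≤ ρ ^ 2 * exp 1 ^ 3)]
  · have hlt : c / r < exp 1 := by
      rw [div_lt_iff₀ hr₀, mul_comm, ← div_lt_iff₀ (exp_pos 1)]
      exact not_le.1 hrm
    rw [indicator_of_notMem fun h => hrm h.2, mul_zero, add_zero]
    have h1 : r ^ 2 ≤ ρ ^ 2 := pow_le_pow_left₀ hr₀.le hr.2.le 2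
    have h2 : f (c / r) ≤ exp 1 ^ 3 := hf_le.trans (pow_le_pow_left₀ (by positivity) hlt.le 3)
    exact mul_le_mul h1 h2 hf₀ (by positivity)

lemma integrableOn_sq_mul_comp_const_div
    (hf : ∀ s : ℝ, 0 ≤ s → f ((1 + s) * log (1 + s)) = s ^ 3) {c : ℝ} (hc : 0 < c) (ρ : ℝ) :
    IntegrableOn (fun r => r ^ 2 * f (c / r)) (Ioo 0 ρ) := by
  have hanti : AntitoneOn (fun r => f (c / r)) (Ioo 0 ρ) := fun r₁ h₁ r₂ h₂ h =>
    monotoneOn_of_comp_one_add_mul_log_one_add hf (div_nonneg hc.le h₂.1.le)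
      (div_nonneg hc.le h₁.1.le) (div_le_div_of_nonneg_left hc.le h₁.1 h)
  have hmeas : AEStronglyMeasurable (fun r => r ^ 2 * f (c / r)) (volume.restrict (Ioo 0 ρ)) :=
    ((measurable_id.pow_const 2).aemeasurable.mul
      (aemeasurable_restrict_of_antitoneOn measurableSet_Ioo hanti)).aestronglyMeasurable
  have hinv_log : IntegrableOn (fun r => (r * log (c / r) ^ 2)⁻¹) (Ioc 0 (c / exp 1)) :=
    integrableOn_inv_mul_log_const_div_sq hc (div_lt_self hc (one_lt_exp_iff.2 one_pos))
  have hdom : IntegrableOn (fun r => ρ ^ 2 * exp 1 ^ 3 + 8 * c ^ 3 *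
      (Ioc 0 (c / exp 1)).indicator (fun r => (r * log (c / r) ^ 2)⁻¹) r) (Ioo 0 ρ) :=
    (integrableOn_const (by simp)).add
      (((integrable_indicator_iff measurableSet_Ioc).2 hinv_log).const_mul _).integrableOn
  exact hdom.mono' hmeas ((ae_restrict_iff' measurableSet_Ioo).2 <| .of_forall fun r hr =>
    norm_sq_mul_comp_const_div_le hf hc hr)

end CubeOfOneAddMulLog

theorem f3_potential_integrable_general (lam ρ : ℝ) (hlam : 0 < lam)
    (f₃ : ℝ → ℝ) (hf₃ : ∀ s : ℝ, 0 ≤ s → f₃ ((1 + s) * Real.log (1 + s)) = s ^ 3) :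
    IntegrableOn (fun y => f₃ (lam / ‖y‖))
      {y : EuclideanSpace ℝ (Fin 3) | ‖y‖ < ρ} := by
  have hball : {y : EuclideanSpace ℝ (Fin 3) | ‖y‖ < ρ} = Metric.ball 0 ρ := by
    ext
    simp
  rw [hball, integrableOn_fun_norm_addHaar volume (f := fun r => f₃ (lam / r)),
    finrank_euclideanSpace_fin]
  simpa only [smul_eq_mul] using integrableOn_sq_mul_comp_const_div hf₃ hlam ρ

theorem f3_potential_integrable (lam ρ : ℝ) (hlam : 0 < lam) (hρ : 0 < ρ)
    (f₃ : ℝ → ℝ) (hf₃ : ∀ s : ℝ, 0 ≤ s → f₃ ((1 + s) * Real.log (1 + s)) = s ^ 3) :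
    IntegrableOn (fun y => f₃ (lam / ‖y‖))
      {y : EuclideanSpace ℝ (Fin 3) | ‖y‖ < ρ} :=
  f3_potential_integrable_general lam ρ hlam f₃ hf₃
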